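/- Let I₀(x) = ∑_{k=0}^∞ (x/2)^{2k} / (k!)² and I₁(x) = ∑_{k=0}^∞ (x/2)^{2k+1} / (k!·(k+1)!). Fix β ∈ ℝ, μ > 0, ℓ > 0, R > 0, and define v : (0, R] → ℝ by v(r) = (β/(4μ))(R² − r²) + (β/(2μ))·(Rℓ/I₁(R/ℓ))·(I₀(r/ℓ) − I₀(R/ℓ)). Then v satisfies 𝓛(1 − ℓ²𝓛)v = −β/μ on (0, R), together with the strong adherence boundary conditions v(R) = 0 and v'(R) = 0, where 𝓛f = f'' + (1/r) f'. -/

import Mathlib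

/-- Modified Bessel function of the first kind of order 0. -/
noncomputable def besselI0 (x : ℝ) : ℝ :=
  ∑' k : ℕ, (x / 2) ^ (2 * k) / (k.factorial : ℝ) ^ 2

/-- Modified Bessel function of the first kind of order 1. -/
noncomputable def besselI1 (x : ℝ) : ℝ :=
  ∑' k : ℕ, (x / 2) ^ (2 * k + 1) / ((k.factorial : ℝ) * ((k + 1).factorial : ℝ))

/-- The cylindrical operator `𝓛 f = f'' + (1/r) f'`. -/
noncomputable def cylOpL (f : ℝ → ℝ) (r : ℝ) : ℝ :=
  deriv (deriv f) r + (1 / r) * deriv f r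

noncomputable def Fj (j : ℕ) (t : ℝ) : ℝ :=
  ∑' k : ℕ, t ^ k / ((k.factorial : ℝ) * ((k + j).factorial : ℝ))

lemma summable_Fj (j : ℕ) (t : ℝ) :
    Summable (fun k : ℕ => t ^ k / ((k.factorial : ℝ) * ((k + j).factorial : ℝ))) := by
  apply Summable.of_norm_bounded (Real.summable_pow_div_factorial |t|)
  intro k
  have h1 : (0:ℝ) < (k.factorial : ℝ) := by exact_mod_cast k.factorial_pos
  have h2 : (0:ℝ) < ((k + j).factorial : ℝ) := by exact_mod_cast (k + j).factorial_pos
  have h3 : (1:ℝ) ≤ ((k + j).factorial : ℝ) := by exact_mod_cast (k + j).factorial_pos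
  calc ‖t ^ k / ((k.factorial : ℝ) * ((k + j).factorial : ℝ))‖
      = |t| ^ k / ((k.factorial : ℝ) * ((k + j).factorial : ℝ)) := by
        rw [Real.norm_eq_abs, abs_div, abs_pow, abs_of_pos (mul_pos h1 h2)]
    _ ≤ |t| ^ k / (k.factorial : ℝ) := by
        gcongr
        exact le_mul_of_one_le_right h1.le h3

lemma summable_deriv_Fj (j : ℕ) (r : ℝ) (hr : 0 ≤ r) :
    Summable (fun k : ℕ => (k : ℝ) * r ^ (k - 1) / ((k.factorial : ℝ) * ((k + j).factorial : ℝ))) := by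
  rw [← summable_nat_add_iff 1]
  apply Summable.of_norm_bounded (Real.summable_pow_div_factorial r)
  intro k
  have h1 : (0:ℝ) < (k.factorial : ℝ) := by exact_mod_cast k.factorial_pos
  have h2 : (0:ℝ) < ((k + 1 + j).factorial : ℝ) := by exact_mod_cast (k + 1 + j).factorial_pos
  have h3 : (1:ℝ) ≤ ((k + 1 + j).factorial : ℝ) := by exact_mod_cast (k + 1 + j).factorial_pos
  have heq : ((k + 1 : ℕ) : ℝ) * r ^ (k + 1 - 1) / (((k + 1).factorial : ℝ) * ((k + 1 + j).factorial : ℝ))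
      = r ^ k / ((k.factorial : ℝ) * ((k + 1 + j).factorial : ℝ)) := by
    have : ((k + 1).factorial : ℝ) = (k + 1 : ℝ) * (k.factorial : ℝ) := by
      rw [Nat.factorial_succ]; push_cast; ring
    rw [Nat.add_sub_cancel, this]
    have hk1 : (k + 1 : ℝ) ≠ 0 := by positivity
    field_simp
    push_cast; ring
  rw [heq]
  have hnn : (0:ℝ) ≤ r ^ k / ((k.factorial : ℝ) * ((k + 1 + j).factorial : ℝ)) := by positivity
  rw [Real.norm_eq_abs, abs_of_nonneg hnn]
  calc r ^ k / ((k.factorial : ℝ) * ((k + 1 + j).factorial : ℝ))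
      ≤ r ^ k / (k.factorial : ℝ) := by
        gcongr
        exact le_mul_of_one_le_right h1.le h3

lemma hasDerivAt_Fj (j : ℕ) (t : ℝ) : HasDerivAt (Fj j) (Fj (j + 1) t) t := by
  set r : ℝ := |t| + 1 with hrdef
  have hr0 : (0:ℝ) < r := by positivity
  have htmem : t ∈ Metric.ball (0:ℝ) r := by
    simp [Real.dist_eq, hrdef]
  have key : HasDerivAt (fun z : ℝ => ∑' k : ℕ, z ^ k / ((k.factorial : ℝ) * ((k + j).factorial : ℝ)))
      (∑' k : ℕ, (k : ℝ) * t ^ (k - 1) / ((k.factorial : ℝ) * ((k + j).factorial : ℝ))) t := by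
    apply hasDerivAt_tsum_of_isPreconnected (summable_deriv_Fj j r hr0.le)
      Metric.isOpen_ball (convex_ball (0:ℝ) r).isPreconnected
      (fun k y _ => (hasDerivAt_pow k y).div_const _) ?_ htmem (summable_Fj j t) htmem
    intro k y hy
    have h1 : (0:ℝ) < (k.factorial : ℝ) * ((k + j).factorial : ℝ) := by
      have := k.factorial_pos; have := (k + j).factorial_pos; positivity
    have hyr : |y| ≤ r := by
      have := Metric.mem_ball.mp hy
      rw [Real.dist_eq, sub_zero] at this
      exact this.le
    rw [Real.norm_eq_abs, abs_div, abs_mul, abs_pow, abs_of_pos h1, Nat.abs_cast]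
    gcongr
  have hsum_t : Summable (fun k : ℕ => (k : ℝ) * t ^ (k - 1) / ((k.factorial : ℝ) * ((k + j).factorial : ℝ))) := by
    apply Summable.of_norm_bounded (summable_deriv_Fj j |t| (abs_nonneg t))
    intro k
    have h1 : (0:ℝ) < (k.factorial : ℝ) * ((k + j).factorial : ℝ) := by
      have := k.factorial_pos; have := (k + j).factorial_pos; positivity
    rw [Real.norm_eq_abs, abs_div, abs_mul, abs_pow, abs_of_pos h1, Nat.abs_cast]
  have hfun : Fj j = fun z : ℝ => ∑' k : ℕ, z ^ k / ((k.factorial : ℝ) * ((k + j).factorial : ℝ)) := rfl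
  rw [hfun]
  convert key using 1
  rw [Summable.tsum_eq_zero_add hsum_t]
  simp only [Nat.cast_zero, zero_mul, zero_div, zero_add]
  unfold Fj
  apply tsum_congr
  intro k
  have hidx : k + 1 + j = k + (j + 1) := by omega
  have hfs : ((k + 1).factorial : ℝ) = (k + 1 : ℝ) * (k.factorial : ℝ) := by
    rw [Nat.factorial_succ]; push_cast; ring
  have h1 : ((k.factorial : ℝ)) ≠ 0 := by
    have := k.factorial_pos; positivity
  have h2 : (((k + 1 + j).factorial : ℝ)) ≠ 0 := by
    have := (k + 1 + j).factorial_pos; positivity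
  have hk1 : (k + 1 : ℝ) ≠ 0 := by positivity
  rw [← hidx]
  rw [Nat.add_sub_cancel, hfs]
  push_cast
  field_simp

lemma Fj_identity (t : ℝ) : Fj 1 t + t * Fj 2 t = Fj 0 t := by
  have h0 := summable_Fj 0 t
  have h1 := summable_Fj 1 t
  have h2 := summable_Fj 2 t
  unfold Fj
  rw [Summable.tsum_eq_zero_add h0, Summable.tsum_eq_zero_add h1, ← tsum_mul_left]
  have hS1 : Summable (fun k : ℕ => t ^ (k + 1) /
      (((k + 1).factorial : ℝ) * ((k + 1 + 1).factorial : ℝ))) := (summable_nat_add_iff 1).2 h1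
  have hS2 : Summable (fun k : ℕ => t * (t ^ k / ((k.factorial : ℝ) * ((k + 2).factorial : ℝ)))) :=
    h2.mul_left t
  have hcomb : ∀ k : ℕ, t ^ (k + 1) / (((k + 1).factorial : ℝ) * ((k + 1 + 1).factorial : ℝ))
      + t * (t ^ k / ((k.factorial : ℝ) * ((k + 2).factorial : ℝ)))
      = t ^ (k + 1) / (((k + 1).factorial : ℝ) * ((k + 1 + 0).factorial : ℝ)) := by
    intro k
    have e1 : k + 1 + 1 = k + 2 := by omega
    have e2 : k + 1 + 0 = k + 1 := by omega
    rw [e1, e2]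
    have hf1 : ((k.factorial : ℝ)) ≠ 0 := by have := k.factorial_pos; positivity
    have hf2 : (((k + 1).factorial : ℝ)) ≠ 0 := by have := (k + 1).factorial_pos; positivity
    have hf3 : (((k + 2).factorial : ℝ)) ≠ 0 := by have := (k + 2).factorial_pos; positivity
    have hs1 : ((k + 1).factorial : ℝ) = (k + 1 : ℝ) * (k.factorial : ℝ) := by
      rw [Nat.factorial_succ]; push_cast; ring
    have hs2 : ((k + 2).factorial : ℝ) = (k + 2 : ℝ) * ((k + 1).factorial : ℝ) := by
      have : k + 2 = (k + 1) + 1 := by omega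
      rw [this, Nat.factorial_succ]; push_cast; ring
    rw [hs2, hs1]
    field_simp
    ring
  rw [add_assoc, ← Summable.tsum_add hS1 hS2, tsum_congr hcomb]
  norm_num

lemma besselI0_eq (x : ℝ) : besselI0 x = Fj 0 ((x / 2) ^ 2) := by
  unfold besselI0 Fj
  apply tsum_congr
  intro k
  rw [pow_mul, sq (k.factorial : ℝ)]
  norm_num

lemma besselI1_eq (x : ℝ) : besselI1 x = (x / 2) * Fj 1 ((x / 2) ^ 2) := by
  unfold besselI1 Fj
  rw [← tsum_mul_left]
  apply tsum_congr
  intro k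
  rw [pow_add, pow_one, pow_mul]
  push_cast
  ring

lemma hasDerivAt_half_sq (x : ℝ) : HasDerivAt (fun x : ℝ => (x / 2) ^ 2) (x / 2) x := by
  have h := ((hasDerivAt_id x).div_const 2).pow 2
  refine h.congr_deriv ?_
  simp only [id_eq]
  push_cast
  ring

lemma hasDerivAt_besselI0 (x : ℝ) : HasDerivAt besselI0 (besselI1 x) x := by
  have h1 : HasDerivAt (fun x : ℝ => Fj 0 ((x / 2) ^ 2)) (Fj 1 ((x / 2) ^ 2) * (x / 2)) x :=
    by have := (hasDerivAt_Fj 0 ((x / 2) ^ 2)).comp x (hasDerivAt_half_sq x); exact this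
  rw [funext besselI0_eq, besselI1_eq]
  convert h1 using 1
  ring

lemma hasDerivAt_besselI1 (x : ℝ) :
    HasDerivAt besselI1 (Fj 1 ((x / 2) ^ 2) / 2 + (x / 2) ^ 2 * Fj 2 ((x / 2) ^ 2)) x := by
  have h1 := ((hasDerivAt_id x).div_const 2).mul
    ((hasDerivAt_Fj 1 ((x / 2) ^ 2)).comp x (hasDerivAt_half_sq x))
  rw [funext besselI1_eq]
  refine h1.congr_deriv ?_
  simp only [Function.comp, id_eq]
  norm_num
  ring

lemma Fj1_pos (t : ℝ) (ht : 0 ≤ t) : 0 < Fj 1 t := by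
  unfold Fj
  apply Summable.tsum_pos (summable_Fj 1 t) ?_ 0
  · norm_num
  · intro k
    have h1 : (0:ℝ) < (k.factorial : ℝ) := by exact_mod_cast k.factorial_pos
    have h2 : (0:ℝ) < ((k + 1).factorial : ℝ) := by exact_mod_cast (k + 1).factorial_pos
    have := pow_nonneg ht k
    positivity

lemma besselI1_pos (x : ℝ) (hx : 0 < x) : 0 < besselI1 x := by
  rw [besselI1_eq]
  exact mul_pos (by positivity) (Fj1_pos _ (by positivity))
/-- The strong-adherence Poiseuille velocity profile satisfies the fourth-order
equation `𝓛(1 − ℓ²𝓛)v = −β/μ` on `(0, R)` with `v(R) = 0` and `v'(R) = 0`. -/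
theorem poiseuille_strong_adherence_solution
    (β μ ℓ R : ℝ) (hμ : 0 < μ) (hℓ : 0 < ℓ) (hR : 0 < R)
    (v : ℝ → ℝ)
    (hv : ∀ r, v r = β / (4 * μ) * (R ^ 2 - r ^ 2)
      + β / (2 * μ) * (R * ℓ / besselI1 (R / ℓ))
        * (besselI0 (r / ℓ) - besselI0 (R / ℓ))) :
    (∀ r ∈ Set.Ioo (0:ℝ) R,
      cylOpL (fun s => v s - ℓ ^ 2 * cylOpL v s) r = -(β / μ)) ∧
    v R = 0 ∧ deriv v R = 0 := by
  have hμ0 : μ ≠ 0 := ne_of_gt hμ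
  have hℓ0 : ℓ ≠ 0 := ne_of_gt hℓ
  have hI1pos : 0 < besselI1 (R / ℓ) := besselI1_pos _ (by positivity)
  have hI1ne : besselI1 (R / ℓ) ≠ 0 := ne_of_gt hI1pos
  set A := β / (4 * μ) with hA
  set C := β / (2 * μ) * (R * ℓ / besselI1 (R / ℓ)) with hC
  have hv' : ∀ r : ℝ, HasDerivAt v (-(2 * A * r) + C / ℓ * besselI1 (r / ℓ)) r := by
    intro r
    rw [funext hv]
    have hq : HasDerivAt (fun r : ℝ => R ^ 2 - r ^ 2) (-(2 * r)) r := by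
      have := (hasDerivAt_pow 2 r).const_sub (R ^ 2)
      refine this.congr_deriv ?_
      push_cast; ring
    have hb : HasDerivAt (fun r : ℝ => besselI0 (r / ℓ) - besselI0 (R / ℓ))
        (besselI1 (r / ℓ) * (1 / ℓ)) r :=
      ((hasDerivAt_besselI0 (r / ℓ)).comp r ((hasDerivAt_id r).div_const ℓ)).sub_const _
    have h := (hq.const_mul A).add (hb.const_mul C)
    refine h.congr_deriv ?_
    ring
  have hdv : deriv v = fun r : ℝ => -(2 * A * r) + C / ℓ * besselI1 (r / ℓ) :=
    funext fun r => (hv' r).deriv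
  have hv'' : ∀ r : ℝ, HasDerivAt (deriv v)
      (-(2 * A) + C / ℓ * ((Fj 1 ((r / ℓ / 2) ^ 2) / 2
        + (r / ℓ / 2) ^ 2 * Fj 2 ((r / ℓ / 2) ^ 2)) * (1 / ℓ))) r := by
    intro r
    rw [hdv]
    have hb1 : HasDerivAt (fun r : ℝ => besselI1 (r / ℓ))
        ((Fj 1 ((r / ℓ / 2) ^ 2) / 2 + (r / ℓ / 2) ^ 2 * Fj 2 ((r / ℓ / 2) ^ 2)) * (1 / ℓ)) r :=
      by have := (hasDerivAt_besselI1 (r / ℓ)).comp r ((hasDerivAt_id r).div_const ℓ); exact this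
    have hlin : HasDerivAt (fun r : ℝ => -(2 * A * r)) (-(2 * A)) r := by
      have := ((hasDerivAt_id r).const_mul (2 * A)).neg
      refine this.congr_deriv ?_
      norm_num
    exact hlin.add (hb1.const_mul (C / ℓ))
  have hLv : ∀ r : ℝ, r ≠ 0 → cylOpL v r = -(β / μ) + C / ℓ ^ 2 * besselI0 (r / ℓ) := by
    intro r hr
    unfold cylOpL
    rw [(hv'' r).deriv]
    simp only [hdv]
    rw [besselI0_eq (r / ℓ), besselI1_eq (r / ℓ), ← Fj_identity ((r / ℓ / 2) ^ 2), hA, hC]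
    field_simp
    ring
  refine ⟨?_, ?_, ?_⟩
  · intro r hrel
    obtain ⟨hr0, hrR⟩ := hrel
    have hweq : ∀ s : ℝ, 0 < s → v s - ℓ ^ 2 * cylOpL v s
        = A * (R ^ 2 - s ^ 2) + (ℓ ^ 2 * (β / μ) - C * besselI0 (R / ℓ)) := by
      intro s hs
      rw [hLv s (ne_of_gt hs), hv s]
      field_simp
      ring
    have hq' : ∀ s : ℝ, HasDerivAt (fun s : ℝ => A * (R ^ 2 - s ^ 2)
        + (ℓ ^ 2 * (β / μ) - C * besselI0 (R / ℓ))) (-(2 * A * s)) s := by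
      intro s
      have hq : HasDerivAt (fun s : ℝ => R ^ 2 - s ^ 2) (-(2 * s)) s := by
        have := (hasDerivAt_pow 2 s).const_sub (R ^ 2)
        refine this.congr_deriv ?_
        push_cast; ring
      have h := (hq.const_mul A).add_const (ℓ ^ 2 * (β / μ) - C * besselI0 (R / ℓ))
      refine h.congr_deriv ?_
      ring
    have hdw : ∀ s : ℝ, 0 < s → deriv (fun s => v s - ℓ ^ 2 * cylOpL v s) s = -(2 * A * s) := by
      intro s hs
      have hEv : (fun s => v s - ℓ ^ 2 * cylOpL v s) =ᶠ[nhds s]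
          (fun s => A * (R ^ 2 - s ^ 2) + (ℓ ^ 2 * (β / μ) - C * besselI0 (R / ℓ))) :=
        Filter.eventuallyEq_of_mem (Ioi_mem_nhds hs) (fun y hy => hweq y hy)
      rw [hEv.deriv_eq, (hq' s).deriv]
    show deriv (deriv fun s => v s - ℓ ^ 2 * cylOpL v s) r
      + 1 / r * deriv (fun s => v s - ℓ ^ 2 * cylOpL v s) r = -(β / μ)
    have hEv2 : deriv (fun s => v s - ℓ ^ 2 * cylOpL v s) =ᶠ[nhds r]
        (fun s : ℝ => -(2 * A * s)) :=
      Filter.eventuallyEq_of_mem (Ioi_mem_nhds hr0) (fun y hy => hdw y hy)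
    have hd2 : HasDerivAt (fun s : ℝ => -(2 * A * s)) (-(2 * A)) r := by
      have := ((hasDerivAt_id r).const_mul (2 * A)).neg
      refine this.congr_deriv ?_
      norm_num
    rw [hEv2.deriv_eq, hd2.deriv, hdw r hr0, hA]
    have hr0' : r ≠ 0 := ne_of_gt hr0
    field_simp
    ring
  · rw [hv R]; ring
  · rw [(hv' R).deriv, hA, hC]
    field_simp
    ring
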